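/- Let H be the join of two finite simple graphs H1 and H2 (the disjoint union of H1 and H2 together with all edges between V(H1) and V(H2)). Then H is {P4, K1 ∪ P3}-free if and only if both H1 and H2 are {P4, K1 ∪ P3}-free. -/

import Mathlib

open SimpleGraph

/-- `G` is `H`-free: no induced subgraph of `G` is isomorphic to `H`
(an induced copy is a graph embedding). -/
def InducedFree {α β : Type*} (H : SimpleGraph β) (G : SimpleGraph α) : Prop :=
  ¬ Nonempty (H ↪g G)

/-- The join of two graphs: their disjoint union together with all edges
between the two vertex sets. -/
def graphJoin {α β : Type*} (H1 : SimpleGraph α) (H2 : SimpleGraph β) :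
    SimpleGraph (α ⊕ β) where
  Adj x y :=
    Sum.elim (fun a => Sum.elim (fun b => H1.Adj a b) (fun _ => True) y)
             (fun a => Sum.elim (fun _ => True) (fun b => H2.Adj a b) y) x
  symm := by
    constructor
    rintro (a|a) (b|b) h
    · exact h.symm
    · trivial
    · trivial
    · exact h.symm
  loopless := by
    constructor
    rintro (a|a) h
    · exact H1.loopless.irrefl a h
    · exact H2.loopless.irrefl a h

/-- The path on four vertices. -/
def P4 : SimpleGraph (Fin 4) := fromEdgeSet {s(0,1), s(1,2), s(2,3)}

/-- `K1 ∪ P3`: a path `1-2-3` together with the isolated vertex `0`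
(the complement of the paw). -/
def K1uP3 : SimpleGraph (Fin 4) := fromEdgeSet {s(1,2), s(2,3)}

/-!
Two vertices of a join that are not adjacent lie on the same side, so along any path in the
complement of an induced copy of a graph the side never changes. Both `P4` and `K1 ∪ P3` have
connected complements, hence every induced copy of them in the join lies inside `H1` or inside
`H2`. Conversely, `H1` and `H2` are induced subgraphs of their join.
-/

theorem SimpleGraph.Reachable.apply_eq_of_forall_adj {V γ : Type*} {G : SimpleGraph V}
    {f : V → γ} (hf : ∀ x y, G.Adj x y → f x = f y) {u v : V} (h : G.Reachable u v) :
    f u = f v := by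
  obtain ⟨p⟩ := h
  induction p with
  | nil => rfl
  | cons hadj _ ih => exact (hf _ _ hadj).trans ih

theorem SimpleGraph.preconnected_of_forall_reachable {V : Type*} {G : SimpleGraph V} (v : V)
    (h : ∀ w, G.Reachable v w) : G.Preconnected :=
  fun u w => (h u).symm.trans (h w)

theorem compl_P4_preconnected : P4ᶜ.Preconnected := by
  have h02 : P4ᶜ.Adj 0 2 := by simp [P4]
  have h03 : P4ᶜ.Adj 0 3 := by simp [P4]
  have h13 : P4ᶜ.Adj 1 3 := by simp [P4]
  refine preconnected_of_forall_reachable 0 fun i => ?_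
  fin_cases i
  exacts [.rfl, h03.reachable.trans h13.symm.reachable, h02.reachable, h03.reachable]

theorem compl_K1uP3_preconnected : K1uP3ᶜ.Preconnected := by
  have h01 : K1uP3ᶜ.Adj 0 1 := by simp [K1uP3]
  have h02 : K1uP3ᶜ.Adj 0 2 := by simp [K1uP3]
  have h03 : K1uP3ᶜ.Adj 0 3 := by simp [K1uP3]
  refine preconnected_of_forall_reachable 0 fun i => ?_
  fin_cases i
  exacts [.rfl, h01.reachable, h02.reachable, h03.reachable]

namespace graphJoin

variable {α β γ : Type*} {H1 : SimpleGraph α} {H2 : SimpleGraph β} {G : SimpleGraph γ}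

variable (H1 H2) in
def embeddingInl : H1 ↪g graphJoin H1 H2 :=
  ⟨⟨Sum.inl, Sum.inl_injective⟩, Iff.rfl⟩

variable (H1 H2) in
def embeddingInr : H2 ↪g graphJoin H1 H2 :=
  ⟨⟨Sum.inr, Sum.inr_injective⟩, Iff.rfl⟩

theorem isLeft_eq_of_not_adj {x y : α ⊕ β} (h : ¬ (graphJoin H1 H2).Adj x y) :
    x.isLeft = y.isLeft := by
  rcases x with a | a <;> rcases y with b | b <;> simp_all [graphJoin]

theorem nonempty_embedding_left (f : G ↪g graphJoin H1 H2) (h : ∀ i, (f i).isLeft) :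
    Nonempty (G ↪g H1) := by
  have hf : ∀ i, f i = .inl ((f i).getLeft (h i)) := fun i => (Sum.inl_getLeft _ _).symm
  refine ⟨⟨⟨fun i => (f i).getLeft (h i), fun i j hij => f.injective ?_⟩, ?_⟩⟩
  · rw [hf i, hf j]
    exact congrArg Sum.inl hij
  · intro i j
    rw [← f.map_rel_iff, hf i, hf j]
    exact Iff.rfl

theorem nonempty_embedding_right (f : G ↪g graphJoin H1 H2) (h : ∀ i, (f i).isRight) :
    Nonempty (G ↪g H2) := by
  have hf : ∀ i, f i = .inr ((f i).getRight (h i)) := fun i => (Sum.inr_getRight _ _).symm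
  refine ⟨⟨⟨fun i => (f i).getRight (h i), fun i j hij => f.injective ?_⟩, ?_⟩⟩
  · rw [hf i, hf j]
    exact congrArg Sum.inr hij
  · intro i j
    rw [← f.map_rel_iff, hf i, hf j]
    exact Iff.rfl

theorem nonempty_embedding_of_compl_preconnected (hG : Gᶜ.Preconnected)
    (f : G ↪g graphJoin H1 H2) : Nonempty (G ↪g H1) ∨ Nonempty (G ↪g H2) := by
  have hconst : ∀ i j, (f i).isLeft = (f j).isLeft := fun i j =>
    (hG i j).apply_eq_of_forall_adj fun x y hxy =>
      isLeft_eq_of_not_adj fun h => (compl_adj G x y).mp hxy |>.2 (f.map_rel_iff.mp h)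
  by_cases hleft : ∀ i, (f i).isLeft
  · exact .inl (nonempty_embedding_left f hleft)
  · obtain ⟨j, hj⟩ := not_forall.mp hleft
    refine .inr (nonempty_embedding_right f fun i => ?_)
    rw [← Sum.not_isLeft, hconst i j]
    simpa using hj

end graphJoin

theorem InducedFree.of_embedding {γ δ ε : Type*} {H : SimpleGraph γ} {G : SimpleGraph δ}
    {G' : SimpleGraph ε} (h : InducedFree H G') (e : G ↪g G') : InducedFree H G :=
  fun ⟨f⟩ => h ⟨e.comp f⟩

theorem inducedFree_graphJoin_iff {α β γ : Type*} {H1 : SimpleGraph α} {H2 : SimpleGraph β}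
    {H : SimpleGraph γ} (hH : Hᶜ.Preconnected) :
    InducedFree H (graphJoin H1 H2) ↔ InducedFree H H1 ∧ InducedFree H H2 := by
  refine ⟨fun h => ⟨h.of_embedding (graphJoin.embeddingInl H1 H2),
    h.of_embedding (graphJoin.embeddingInr H1 H2)⟩, fun ⟨h1, h2⟩ ⟨f⟩ => ?_⟩
  rcases graphJoin.nonempty_embedding_of_compl_preconnected hH f with hf | hf
  exacts [h1 hf, h2 hf]

theorem join_P4_K1uP3_free_general {α β : Type*}
    (H1 : SimpleGraph α) (H2 : SimpleGraph β) :
    (InducedFree P4 (graphJoin H1 H2) ∧ InducedFree K1uP3 (graphJoin H1 H2)) ↔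
      ((InducedFree P4 H1 ∧ InducedFree K1uP3 H1) ∧
       (InducedFree P4 H2 ∧ InducedFree K1uP3 H2)) := by
  rw [inducedFree_graphJoin_iff compl_P4_preconnected,
    inducedFree_graphJoin_iff compl_K1uP3_preconnected]
  tauto

theorem join_P4_K1uP3_free {α β : Type*} [Fintype α] [Fintype β]
    (H1 : SimpleGraph α) (H2 : SimpleGraph β) :
    (InducedFree P4 (graphJoin H1 H2) ∧ InducedFree K1uP3 (graphJoin H1 H2)) ↔
      ((InducedFree P4 H1 ∧ InducedFree K1uP3 H1) ∧
       (InducedFree P4 H2 ∧ InducedFree K1uP3 H2)) :=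
  join_P4_K1uP3_free_general H1 H2
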